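/- arXiv:2106.07764 — 2 statements merged into one kernel-verified Lean document; each statement's English description precedes it below -/
import Mathlib

section
/- Let d ≥ 2, let φ : ℝ^{d−1} → ℝ be a Lipschitz function, and let Σ = {(y, φ(y)) : y ∈ ℝ^{d−1}} ⊂ ℝ^d be its graph (a Lipschitz hypersurface). Then for every real s with −1 < s < 1, the function w(x) = dist(x, Σ)^s (the Euclidean distance from x to the set Σ, raised to the power s) is an A₂-Muckenhoupt weight on ℝ^d. -/
/-!
Write `x = (y, u)` with `y ∈ ℝⁿ`, `u ∈ ℝ`, and let `h x = u - φ y` be the height of `x` above the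
graph `Σ`. Since `h` is `(1 + L)`-Lipschitz and vanishes on `Σ`, while `(y, φ y) ∈ Σ` lies at
distance `|h x|` from `x`, `dist(x, Σ)` and `|h x|` are comparable, and it suffices to bound
integrals of `|h| ^ t` for `t = ±s`. The shear `(y, u) ↦ (y, u - φ y)` preserves Lebesgue measure
and maps the ball `B(c, r)` into a cylinder over an interval of length `2 (1 + L) r` centred at
`h c`. On such an interval `∫ |u| ^ t ≲ r M ^ t` with `M = max ((1 + L) r) |h c|`, because
`-1 < t ≤ 1`. Hence `⨍_B dist(·, Σ) ^ (±s) ≲ M ^ (±s)`, and the powers of `M` cancel in the product.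
-/

open MeasureTheory Metric Set
open scoped NNReal ENNReal

theorem Real.rpow_le_mul_rpow_of_le_mul {a b c t : ℝ} (ha : 0 ≤ a) (hc : 1 ≤ c)
    (hba : b ≤ c * a) (hab : a ≤ c * b) (ht : |t| ≤ 1) : b ^ t ≤ c * a ^ t := by
  have hc0 : 0 < c := by linarith
  obtain rfl | ha := ha.eq_or_lt
  · obtain rfl : b = 0 := le_antisymm (by simpa using hba) (by nlinarith)
    exact le_mul_of_one_le_left (Real.rpow_nonneg le_rfl t) hc
  have hb : 0 < b := by nlinarith
  obtain ⟨ht₁, ht₂⟩ := abs_le.mp ht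
  rcases le_total 0 t with h | h
  · calc b ^ t ≤ (c * a) ^ t := Real.rpow_le_rpow hb.le hba h
      _ = c ^ t * a ^ t := Real.mul_rpow hc0.le ha.le
      _ ≤ c * a ^ t := by
        gcongr
        simpa using Real.rpow_le_rpow_of_exponent_le hc ht₂
  · calc b ^ t ≤ (a / c) ^ t :=
          Real.rpow_le_rpow_of_nonpos (by positivity) ((div_le_iff₀' hc0).mpr hab) h
      _ = c ^ (-t) * a ^ t := by
          rw [Real.div_rpow ha.le hc0.le, Real.rpow_neg hc0.le]; ring
      _ ≤ c * a ^ t := by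
        gcongr
        simpa using Real.rpow_le_rpow_of_exponent_le hc (by linarith : -t ≤ 1)

theorem LipschitzWith.abs_le_mul_infDist {α : Type*} [PseudoMetricSpace α] {f : α → ℝ}
    {K : ℝ≥0} (hf : LipschitzWith K f) {s : Set α} (hs : s.Nonempty) (hfs : ∀ y ∈ s, f y = 0)
    (x : α) : |f x| ≤ K * infDist x s := by
  have : Nonempty s := hs.to_subtype
  rw [infDist_eq_iInf, Real.mul_iInf_of_nonneg K.coe_nonneg]
  refine le_ciInf fun y => ?_
  simpa [hfs y y.2, ← Real.dist_eq] using hf.dist_le_mul x y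

theorem setAverage_le_of_setLIntegral_le {α : Type*} [MeasurableSpace α] {μ : Measure α}
    {s : Set α} {f : α → ℝ} (hf : AEStronglyMeasurable f (μ.restrict s)) (hf₀ : 0 ≤ f)
    {a : ℝ} (ha : 0 ≤ a) (h : ∫⁻ x in s, ENNReal.ofReal (f x) ∂μ ≤ ENNReal.ofReal (a * μ.real s)) :
    ⨍ x in s, f x ∂μ ≤ a := by
  have hint : ∫ x in s, f x ∂μ ≤ a * μ.real s := by
    rw [integral_eq_lintegral_of_nonneg_ae (.of_forall hf₀) hf]
    exact ENNReal.toReal_le_of_le_ofReal (by positivity) h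
  rw [setAverage_eq, smul_eq_mul]
  obtain h0 | hpos := (measureReal_nonneg (μ := μ) (s := s)).eq_or_lt
  · simp [← h0, ha]
  · rw [inv_mul_le_iff₀ hpos]; linarith

theorem locallyIntegrable_of_setLIntegral_ball_ne_top {α : Type*} [PseudoMetricSpace α]
    [MeasurableSpace α] {μ : Measure α} {f : α → ℝ} (hf : AEStronglyMeasurable f μ)
    (hf₀ : 0 ≤ f) (h : ∀ x, ∃ r > 0, ∫⁻ y in ball x r, ENNReal.ofReal (f y) ∂μ ≠ ∞) :
    LocallyIntegrable f μ := fun x => by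
  obtain ⟨r, hr, hfin⟩ := h x
  refine ⟨ball x r, ball_mem_nhds x hr, hf.restrict, ?_⟩
  rw [hasFiniteIntegral_iff_ofReal (.of_forall hf₀)]
  exact hfin.lt_top

theorem intervalIntegrable_abs_rpow {t : ℝ} (ht : -1 < t) (a b : ℝ) :
    IntervalIntegrable (fun v : ℝ => |v| ^ t) volume a b := by
  have hpos (c : ℝ) (hc : 0 ≤ c) : IntervalIntegrable (fun v : ℝ => |v| ^ t) volume 0 c :=
    (intervalIntegral.intervalIntegrable_rpow' ht).congr fun v hv => by
      rw [uIoc_of_le hc] at hv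
      simp only [abs_of_pos hv.1]
  have h (c : ℝ) : IntervalIntegrable (fun v : ℝ => |v| ^ t) volume 0 c := by
    rcases le_total 0 c with hc | hc
    · exact hpos c hc
    · simpa using (IntervalIntegrable.iff_comp_neg (by simp)).mp (hpos (-c) (by linarith))
  exact (h a).symm.trans (h b)

theorem integral_abs_rpow_neg_self {t : ℝ} (ht : -1 < t) {a : ℝ} (ha : 0 ≤ a) :
    ∫ v in -a..a, |v| ^ t = 2 * (a ^ (t + 1) / (t + 1)) := by
  have hright : ∫ v in (0 : ℝ)..a, |v| ^ t = a ^ (t + 1) / (t + 1) := by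
    rw [intervalIntegral.integral_congr (g := fun v : ℝ => v ^ t) fun v hv => by
        rw [uIcc_of_le ha] at hv
        simp only [abs_of_nonneg hv.1],
      integral_rpow (Or.inl ht), Real.zero_rpow (by linarith), sub_zero]
  have hleft : ∫ v in -a..0, |v| ^ t = a ^ (t + 1) / (t + 1) := by
    have h := intervalIntegral.integral_comp_neg (a := 0) (b := a) fun v : ℝ => |v| ^ t
    simp only [abs_neg, neg_zero] at h
    rw [← h, hright]
  rw [← intervalIntegral.integral_add_adjacent_intervals (intervalIntegrable_abs_rpow ht _ _)
    (intervalIntegrable_abs_rpow ht _ _), hleft, hright, two_mul]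

theorem setLIntegral_Ioo_neg_self_abs_rpow {t : ℝ} (ht : -1 < t) {a : ℝ} (ha : 0 ≤ a) :
    ∫⁻ v in Ioo (-a) a, ENNReal.ofReal (|v| ^ t)
      = ENNReal.ofReal (2 * (a ^ (t + 1) / (t + 1))) := by
  have hint : IntegrableOn (fun v : ℝ => |v| ^ t) (Ioc (-a) a) :=
    (intervalIntegrable_iff_integrableOn_Ioc_of_le (by linarith)).mp
      (intervalIntegrable_abs_rpow ht _ _)
  rw [← integral_abs_rpow_neg_self ht ha, intervalIntegral.integral_of_le (by linarith),
    ofReal_integral_eq_lintegral_ofReal hint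
      (.of_forall fun v => by positivity)]
  exact setLIntegral_congr Ioo_ae_eq_Ioc

theorem setLIntegral_Ioo_abs_rpow_le {t : ℝ} (ht₁ : -1 < t) (ht₂ : t ≤ 1) {R : ℝ} (hR : 0 < R)
    (m : ℝ) :
    ∫⁻ v in Ioo (m - R) (m + R), ENNReal.ofReal (|v| ^ t)
      ≤ ENNReal.ofReal (18 / (1 + t) * R * max R |m| ^ t) := by
  set M := max R |m|
  have hM : 0 < M := lt_max_of_lt_left hR
  have ht : |t| ≤ 1 := abs_le.mpr ⟨ht₁.le, ht₂⟩
  have ht₀ : 0 < 1 + t := by linarith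
  -- Near the origin enlarge to the centred interval `(-3R, 3R)`; away from it `|v| ≍ |m|`.
  rcases lt_or_ge |m| (2 * R) with hm | hm
  · have hsub : Ioo (m - R) (m + R) ⊆ Ioo (-(3 * R)) (3 * R) := by
      obtain ⟨hm₁, hm₂⟩ := abs_lt.mp hm
      exact Ioo_subset_Ioo (by linarith) (by linarith)
    have hcomp : (3 * R) ^ t ≤ 3 * M ^ t :=
      Real.rpow_le_mul_rpow_of_le_mul hM.le (by norm_num) (by linarith [le_max_left R |m|])
        (max_le (by linarith) (by linarith)) ht
    calc ∫⁻ v in Ioo (m - R) (m + R), ENNReal.ofReal (|v| ^ t)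
        ≤ ∫⁻ v in Ioo (-(3 * R)) (3 * R), ENNReal.ofReal (|v| ^ t) := lintegral_mono_set hsub
      _ = ENNReal.ofReal (2 * ((3 * R) ^ (t + 1) / (t + 1))) :=
        setLIntegral_Ioo_neg_self_abs_rpow ht₁ (by linarith)
      _ ≤ ENNReal.ofReal (18 / (1 + t) * R * M ^ t) := by
        refine ENNReal.ofReal_le_ofReal ?_
        rw [Real.rpow_add_one (by positivity), add_comm t]
        calc 2 * ((3 * R) ^ t * (3 * R) / (1 + t)) = 6 * R * (3 * R) ^ t / (1 + t) := by ring
          _ ≤ 6 * R * (3 * M ^ t) / (1 + t) := by gcongr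
          _ = 18 / (1 + t) * R * M ^ t := by ring
  · have hMm : M = |m| := max_eq_right (by linarith)
    have hbound : ∀ v ∈ Ioo (m - R) (m + R),
        ENNReal.ofReal (|v| ^ t) ≤ ENNReal.ofReal (2 * M ^ t) := by
      intro v hv
      have hvm : |v - m| < R := abs_sub_lt_iff.mpr ⟨by linarith [hv.2], by linarith [hv.1]⟩
      have h₁ := abs_sub_abs_le_abs_sub v m
      have h₂ := abs_sub_abs_le_abs_sub m v
      rw [abs_sub_comm] at h₂
      refine ENNReal.ofReal_le_ofReal (Real.rpow_le_mul_rpow_of_le_mul hM.le one_le_two ?_ ?_ ht)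
      · rw [hMm]; linarith
      · rw [hMm]; linarith
    calc ∫⁻ v in Ioo (m - R) (m + R), ENNReal.ofReal (|v| ^ t)
        ≤ ∫⁻ _ in Ioo (m - R) (m + R), ENNReal.ofReal (2 * M ^ t) :=
          setLIntegral_mono measurable_const hbound
      _ = ENNReal.ofReal (4 * R * M ^ t) := by
        rw [setLIntegral_const, Real.volume_Ioo, ← ENNReal.ofReal_mul (by positivity)]
        ring_nf
      _ ≤ ENNReal.ofReal (18 / (1 + t) * R * M ^ t) := by
        refine ENNReal.ofReal_le_ofReal (by gcongr; rw [le_div_iff₀ ht₀]; linarith)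

variable {n : ℕ}

namespace EuclideanSpace

def init (x : EuclideanSpace ℝ (Fin (n + 1))) : EuclideanSpace ℝ (Fin n) :=
  WithLp.toLp 2 fun i => x i.castSucc

theorem lipschitzWith_init : LipschitzWith 1 (init (n := n)) :=
  LipschitzWith.of_dist_le_mul fun x y => by
    rw [NNReal.coe_one, one_mul, EuclideanSpace.dist_eq, EuclideanSpace.dist_eq]
    refine Real.sqrt_le_sqrt ?_
    rw [Fin.sum_univ_castSucc (f := fun i => dist (x i) (y i) ^ 2)]
    exact le_add_of_nonneg_right (sq_nonneg _)

theorem lipschitzWith_apply {ι : Type*} [Fintype ι] (i : ι) :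
    LipschitzWith 1 fun x : EuclideanSpace ℝ ι => x i :=
  LipschitzWith.of_dist_le_mul fun x y => by simpa using PiLp.dist_apply_le x y i

theorem measurePreserving_init_last :
    MeasurePreserving (fun x : EuclideanSpace ℝ (Fin (n + 1)) => (init x, x (Fin.last n))) := by
  have hsplit := ((PiLp.volume_preserving_toLp (Fin n)).prod (MeasurePreserving.id volume)).comp
    (Measure.measurePreserving_swap.comp
      ((volume_preserving_piFinSuccAbove (fun _ => ℝ) (Fin.last n)).comp
        (PiLp.volume_preserving_ofLp (Fin (n + 1)))))
  rw [Measure.volume_eq_prod]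
  convert hsplit using 1
  ext x i
  · simp [init, Fin.init]
  · simp

end EuclideanSpace

open EuclideanSpace

def euclideanGraph (φ : EuclideanSpace ℝ (Fin n) → ℝ) : Set (EuclideanSpace ℝ (Fin (n + 1))) :=
  {x | x (Fin.last n) = φ (init x)}

def graphHeight (φ : EuclideanSpace ℝ (Fin n) → ℝ) (x : EuclideanSpace ℝ (Fin (n + 1))) : ℝ :=
  x (Fin.last n) - φ (init x)

variable {φ : EuclideanSpace ℝ (Fin n) → ℝ}

theorem graphHeight_eq_zero_iff {x : EuclideanSpace ℝ (Fin (n + 1))} :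
    graphHeight φ x = 0 ↔ x ∈ euclideanGraph φ :=
  sub_eq_zero

theorem lipschitzWith_graphHeight {L : ℝ≥0} (hφ : LipschitzWith L φ) :
    LipschitzWith (1 + L) (graphHeight φ) := by
  have h := (lipschitzWith_apply (Fin.last n)).sub (hφ.comp lipschitzWith_init)
  rwa [mul_one] at h

theorem sub_single_graphHeight_mem_euclideanGraph (x : EuclideanSpace ℝ (Fin (n + 1))) :
    x - EuclideanSpace.single (Fin.last n) (graphHeight φ x) ∈ euclideanGraph φ := by
  have hinit : init (x - EuclideanSpace.single (Fin.last n) (graphHeight φ x)) = init x := by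
    ext i; simp [init, Fin.castSucc_ne_last]
  show _ = φ (init _)
  rw [hinit]
  simp [graphHeight]

theorem infDist_euclideanGraph_le (x : EuclideanSpace ℝ (Fin (n + 1))) :
    infDist x (euclideanGraph φ) ≤ |graphHeight φ x| := by
  simpa [dist_eq_norm] using
    infDist_le_dist_of_mem (x := x) (sub_single_graphHeight_mem_euclideanGraph (φ := φ) x)

theorem abs_graphHeight_le {L : ℝ≥0} (hφ : LipschitzWith L φ) (x : EuclideanSpace ℝ (Fin (n + 1))) :
    |graphHeight φ x| ≤ (1 + L) * infDist x (euclideanGraph φ) := by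
  simpa using (lipschitzWith_graphHeight hφ).abs_le_mul_infDist
    ⟨_, sub_single_graphHeight_mem_euclideanGraph 0⟩ (fun y hy => graphHeight_eq_zero_iff.mpr hy) x

theorem infDist_euclideanGraph_rpow_le {L : ℝ≥0} (hφ : LipschitzWith L φ) {t : ℝ} (ht : |t| ≤ 1)
    (x : EuclideanSpace ℝ (Fin (n + 1))) :
    infDist x (euclideanGraph φ) ^ t ≤ (1 + L) * |graphHeight φ x| ^ t := by
  have hL : (1 : ℝ) ≤ 1 + L := le_add_of_nonneg_right L.coe_nonneg
  refine Real.rpow_le_mul_rpow_of_le_mul (abs_nonneg _) hL ?_ (abs_graphHeight_le hφ x) ht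
  exact (infDist_euclideanGraph_le x).trans (le_mul_of_one_le_left (abs_nonneg _) hL)

theorem measurePreserving_init_graphHeight (hφ : Measurable φ) :
    MeasurePreserving (fun x : EuclideanSpace ℝ (Fin (n + 1)) => (init x, graphHeight φ x)) := by
  have hshear : MeasurePreserving (fun p : EuclideanSpace ℝ (Fin n) × ℝ => (p.1, p.2 - φ p.1))
      (volume.prod volume) (volume.prod volume) :=
    (MeasurePreserving.id volume).skew_product (by fun_prop)
      (.of_forall fun y => map_sub_right_eq_self volume (φ y))
  exact hshear.comp measurePreserving_init_last

theorem setLIntegral_ball_abs_graphHeight_rpow_le {L : ℝ≥0} (hφ : LipschitzWith L φ) {t : ℝ}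
    (ht₁ : -1 < t) (ht₂ : t ≤ 1) (c : EuclideanSpace ℝ (Fin (n + 1))) {r : ℝ} (hr : 0 < r) :
    ∫⁻ x in ball c r, ENNReal.ofReal (|graphHeight φ x| ^ t)
      ≤ volume (ball (init c) r) * ENNReal.ofReal
          (18 / (1 + t) * ((1 + L) * r) * max ((1 + L) * r) |graphHeight φ c| ^ t) := by
  set K : ℝ := 1 + L
  set I := Ioo (graphHeight φ c - K * r) (graphHeight φ c + K * r)
  have hmeas : Measurable fun u : ℝ => ENNReal.ofReal (|u| ^ t) := by fun_prop
  have hsub : ball c r ⊆ (fun x => (init x, graphHeight φ x)) ⁻¹' (ball (init c) r ×ˢ I) := by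
    intro x hx
    have hh := (lipschitzWith_graphHeight hφ).dist_lt_mul_of_lt (by positivity) hx
    refine ⟨(lipschitzWith_init.dist_le_mul x c).trans_lt (by simpa using hx), ?_⟩
    rw [Real.dist_eq, abs_sub_lt_iff, NNReal.coe_add, NNReal.coe_one] at hh
    change graphHeight φ x ∈ I
    exact ⟨by linarith [hh.2], by linarith [hh.1]⟩
  calc ∫⁻ x in ball c r, ENNReal.ofReal (|graphHeight φ x| ^ t)
      ≤ ∫⁻ x in (fun x => (init x, graphHeight φ x)) ⁻¹' (ball (init c) r ×ˢ I),
          ENNReal.ofReal (|graphHeight φ x| ^ t) := lintegral_mono_set hsub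
    _ = ∫⁻ p in ball (init c) r ×ˢ I, ENNReal.ofReal (|p.2| ^ t) :=
        (measurePreserving_init_graphHeight hφ.continuous.measurable).setLIntegral_comp_preimage
          (measurableSet_ball.prod measurableSet_Ioo) (hmeas.comp measurable_snd)
    _ = volume (ball (init c) r) * ∫⁻ u in I, ENNReal.ofReal (|u| ^ t) := by
        rw [Measure.volume_eq_prod, ← Measure.prod_restrict,
          lintegral_prod (fun p => ENNReal.ofReal (|p.2| ^ t))
            (hmeas.comp measurable_snd).aemeasurable]
        dsimp only
        rw [setLIntegral_const, mul_comm]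
    _ ≤ _ := by
        gcongr
        exact setLIntegral_Ioo_abs_rpow_le ht₁ ht₂ (by positivity) _

theorem setLIntegral_ball_infDist_euclideanGraph_rpow_le {L : ℝ≥0} (hφ : LipschitzWith L φ) {t : ℝ}
    (ht₁ : -1 < t) (ht₂ : t ≤ 1) :
    ∃ A > 0, ∀ (c : EuclideanSpace ℝ (Fin (n + 1))) (r : ℝ), 0 < r →
      ∫⁻ x in ball c r, ENNReal.ofReal (infDist x (euclideanGraph φ) ^ t)
        ≤ ENNReal.ofReal
            (A * max ((1 + L) * r) |graphHeight φ c| ^ t * volume.real (ball c r)) := by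
  set K : ℝ := 1 + L
  set V := volume.real (ball (0 : EuclideanSpace ℝ (Fin n)) 1)
  set V' := volume.real (ball (0 : EuclideanSpace ℝ (Fin (n + 1))) 1)
  have hV : 0 < V := ENNReal.toReal_pos (measure_ball_pos _ _ one_pos).ne' measure_ball_lt_top.ne
  have hV' : 0 < V' := ENNReal.toReal_pos (measure_ball_pos _ _ one_pos).ne' measure_ball_lt_top.ne
  have ht₀ : 0 < 1 + t := by linarith
  refine ⟨K * (18 / (1 + t)) * K * V / V', by positivity, fun c r hr => ?_⟩
  have hvol (m : ℕ) (x : EuclideanSpace ℝ (Fin m)) :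
      volume.real (ball x r) = r ^ m * volume.real (ball (0 : EuclideanSpace ℝ (Fin m)) 1) := by
    rw [measureReal_def, Measure.addHaar_ball_of_pos _ _ hr, finrank_euclideanSpace_fin,
      ENNReal.toReal_mul, ENNReal.toReal_ofReal (by positivity), measureReal_def]
  have ht : |t| ≤ 1 := abs_le.mpr ⟨ht₁.le, ht₂⟩
  calc ∫⁻ x in ball c r, ENNReal.ofReal (infDist x (euclideanGraph φ) ^ t)
      ≤ ∫⁻ x in ball c r, ENNReal.ofReal K * ENNReal.ofReal (|graphHeight φ x| ^ t) :=
        lintegral_mono fun x => by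
          rw [← ENNReal.ofReal_mul (by positivity)]
          exact ENNReal.ofReal_le_ofReal (infDist_euclideanGraph_rpow_le hφ ht x)
    _ = ENNReal.ofReal K * ∫⁻ x in ball c r, ENNReal.ofReal (|graphHeight φ x| ^ t) :=
        lintegral_const_mul' _ _ ENNReal.ofReal_ne_top
    _ ≤ ENNReal.ofReal K * (volume (ball (init c) r) * ENNReal.ofReal
          (18 / (1 + t) * (K * r) * max (K * r) |graphHeight φ c| ^ t)) := by
        gcongr
        exact setLIntegral_ball_abs_graphHeight_rpow_le hφ ht₁ ht₂ c hr
    _ = _ := by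
        rw [← ofReal_measureReal measure_ball_lt_top.ne, hvol, hvol,
          ← ENNReal.ofReal_mul (by positivity), ← ENNReal.ofReal_mul (by positivity)]
        congr 1
        field_simp
        ring

theorem locallyIntegrable_infDist_euclideanGraph_rpow {L : ℝ≥0} (hφ : LipschitzWith L φ)
    {t : ℝ} (ht₁ : -1 < t) (ht₂ : t ≤ 1) :
    LocallyIntegrable (fun x => infDist x (euclideanGraph φ) ^ t) volume := by
  obtain ⟨A, -, hA⟩ := setLIntegral_ball_infDist_euclideanGraph_rpow_le hφ ht₁ ht₂
  exact locallyIntegrable_of_setLIntegral_ball_ne_top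
    (measurable_infDist.pow_const t).aestronglyMeasurable
    (fun _ => Real.rpow_nonneg infDist_nonneg _)
    fun x => ⟨1, one_pos, ne_top_of_le_ne_top ENNReal.ofReal_ne_top (hA x 1 one_pos)⟩

theorem setAverage_ball_infDist_euclideanGraph_rpow_le {L : ℝ≥0} (hφ : LipschitzWith L φ)
    {t : ℝ} (ht₁ : -1 < t) (ht₂ : t ≤ 1) :
    ∃ A > 0, ∀ (c : EuclideanSpace ℝ (Fin (n + 1))) (r : ℝ), 0 < r →
      ⨍ x in ball c r, infDist x (euclideanGraph φ) ^ t
        ≤ A * max ((1 + L) * r) |graphHeight φ c| ^ t := by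
  obtain ⟨A, hA₀, hA⟩ := setLIntegral_ball_infDist_euclideanGraph_rpow_le hφ ht₁ ht₂
  refine ⟨A, hA₀, fun c r hr => ?_⟩
  have hM : 0 < max ((1 + L) * r) |graphHeight φ c| := lt_max_of_lt_left (by positivity)
  exact setAverage_le_of_setLIntegral_le
    (measurable_infDist.pow_const t).aestronglyMeasurable.restrict
    (fun _ => Real.rpow_nonneg infDist_nonneg _) (by positivity) (hA c r hr)

theorem dist_to_lipschitz_graph_pow_is_A2_weight_general
    (n : ℕ) (φ : EuclideanSpace ℝ (Fin n) → ℝ) (L : ℝ≥0)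
    (hφ : LipschitzWith L φ) (s : ℝ) (hs₁ : -1 < s) (hs₂ : s < 1)
    (S : Set (EuclideanSpace ℝ (Fin (n + 1))))
    (hS : S = {x : EuclideanSpace ℝ (Fin (n + 1)) |
      x (Fin.last n) = φ (WithLp.toLp 2 (fun i : Fin n => x i.castSucc))}) :
    LocallyIntegrable (fun x : EuclideanSpace ℝ (Fin (n + 1)) => infDist x S ^ s) volume ∧
    LocallyIntegrable (fun x : EuclideanSpace ℝ (Fin (n + 1)) => (infDist x S ^ s)⁻¹) volume ∧
    ∃ C > (0 : ℝ), ∀ (c : EuclideanSpace ℝ (Fin (n + 1))) (r : ℝ), 0 < r →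
      (⨍ x in ball c r, infDist x S ^ s) * (⨍ x in ball c r, (infDist x S ^ s)⁻¹) ≤ C := by
  obtain rfl : S = euclideanGraph φ := hS
  have hneg : -1 < -s := neg_lt_neg hs₂
  have hinv : (fun x => (infDist x (euclideanGraph φ) ^ s)⁻¹)
      = fun x => infDist x (euclideanGraph φ) ^ (-s) :=
    funext fun x => (Real.rpow_neg infDist_nonneg s).symm
  obtain ⟨A, hA₀, hA⟩ := setAverage_ball_infDist_euclideanGraph_rpow_le hφ hs₁ hs₂.le
  obtain ⟨B, hB₀, hB⟩ := setAverage_ball_infDist_euclideanGraph_rpow_le hφ hneg (by linarith)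
  refine ⟨locallyIntegrable_infDist_euclideanGraph_rpow hφ hs₁ hs₂.le,
    hinv ▸ locallyIntegrable_infDist_euclideanGraph_rpow hφ hneg (by linarith),
    A * B, by positivity, fun c r hr => ?_⟩
  rw [hinv]
  set M := max ((1 + L) * r) |graphHeight φ c|
  have hM : 0 < M := lt_max_of_lt_left (by positivity)
  calc _ ≤ (A * M ^ s) * (B * M ^ (-s)) :=
        mul_le_mul (hA c r hr) (hB c r hr)
          (integral_nonneg fun _ => Real.rpow_nonneg infDist_nonneg _) (by positivity)
    _ = A * B := by
        rw [Real.rpow_neg hM.le]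
        field_simp

/-- Let `d = n + 1 ≥ 2`, let `φ : ℝ^{d-1} → ℝ` be Lipschitz and let
`S = {(y, φ y) : y ∈ ℝ^{d-1}} ⊂ ℝ^d` be its graph (a Lipschitz hypersurface).
Then for every real `s` with `-1 < s < 1`, the function `w x = dist(x, S) ^ s` is an
`A₂`-Muckenhoupt weight on `ℝ^d`. -/
theorem dist_to_lipschitz_graph_pow_is_A2_weight
    (n : ℕ) (hn : 1 ≤ n) (φ : EuclideanSpace ℝ (Fin n) → ℝ) (L : ℝ≥0)
    (hφ : LipschitzWith L φ) (s : ℝ) (hs₁ : -1 < s) (hs₂ : s < 1)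
    (S : Set (EuclideanSpace ℝ (Fin (n + 1))))
    (hS : S = {x : EuclideanSpace ℝ (Fin (n + 1)) |
      x (Fin.last n) = φ (WithLp.toLp 2 (fun i : Fin n => x i.castSucc))}) :
    LocallyIntegrable (fun x : EuclideanSpace ℝ (Fin (n + 1)) => infDist x S ^ s) volume ∧
    LocallyIntegrable (fun x : EuclideanSpace ℝ (Fin (n + 1)) => (infDist x S ^ s)⁻¹) volume ∧
    ∃ C > (0 : ℝ), ∀ (c : EuclideanSpace ℝ (Fin (n + 1))) (r : ℝ), 0 < r →
      (⨍ x in ball c r, infDist x S ^ s) * (⨍ x in ball c r, (infDist x S ^ s)⁻¹) ≤ C :=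
  dist_to_lipschitz_graph_pow_is_A2_weight_general n φ L hφ s hs₁ hs₂ S hS
end

section
/- Let E be a real Hilbert space and let B₁, B₂ : E × E → ℝ be continuous bilinear forms that are symmetric (Bᵢ(u, v) = Bᵢ(v, u) for all u, v) and coercive (there exist cᵢ > 0 with Bᵢ(u, u) ≥ cᵢ‖u‖² for all u), and assume B₁(u, u) ≤ B₂(u, u) for all u ∈ E. Let f : E → ℝ be a continuous linear functional and let u₁, u₂ ∈ E be the unique (Lax–Milgram) solutions of B₁(u₁, v) = f(v) for all v ∈ E and B₂(u₂, v) = f(v) for all v ∈ E. Then f(u₂) ≤ f(u₁). -/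
/-- Lax–Milgram comparison principle: if `B₁`, `B₂` are continuous symmetric coercive
bilinear forms on a real Hilbert space `E` with `B₁ u u ≤ B₂ u u` for all `u`, `f` is a
continuous linear functional, and `u₁`, `u₂` are the Lax–Milgram solutions of
`B₁ u₁ v = f v` and `B₂ u₂ v = f v` for all `v`, then `f u₂ ≤ f u₁`. -/
theorem lax_milgram_form_comparison
    {E : Type*} [NormedAddCommGroup E] [InnerProductSpace ℝ E] [CompleteSpace E]
    (B₁ B₂ : E →L[ℝ] E →L[ℝ] ℝ)
    (hsym₁ : ∀ u v, B₁ u v = B₁ v u) (hsym₂ : ∀ u v, B₂ u v = B₂ v u)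
    (c₁ c₂ : ℝ) (hc₁ : 0 < c₁) (hc₂ : 0 < c₂)
    (hcoer₁ : ∀ u, c₁ * ‖u‖ ^ 2 ≤ B₁ u u) (hcoer₂ : ∀ u, c₂ * ‖u‖ ^ 2 ≤ B₂ u u)
    (hle : ∀ u, B₁ u u ≤ B₂ u u)
    (f : E →L[ℝ] ℝ) (u₁ u₂ : E)
    (h₁ : ∀ v, B₁ u₁ v = f v) (h₂ : ∀ v, B₂ u₂ v = f v) :
    f u₂ ≤ f u₁ := by
  have hw : (0:ℝ) ≤ B₁ (u₂ - u₁) (u₂ - u₁) :=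
    le_trans (by positivity) (hcoer₁ _)
  have e : B₁ (u₂ - u₁) (u₂ - u₁)
      = B₁ u₂ u₂ - B₁ u₂ u₁ - B₁ u₁ u₂ + B₁ u₁ u₁ := by
    simp only [map_sub, ContinuousLinearMap.sub_apply]
    ring
  have h12 : B₁ u₁ u₂ = f u₂ := h₁ u₂
  have h21 : B₁ u₂ u₁ = f u₂ := (hsym₁ u₂ u₁).trans h12
  have h11 : B₁ u₁ u₁ = f u₁ := h₁ u₁
  have h22 : B₁ u₂ u₂ ≤ f u₂ := (hle u₂).trans_eq (h₂ u₂)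
  nlinarith [hw, e]
end
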